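/- Let f(x') = h₁(x') − h₂(x') = ∑_{j=1}^{n−1}(λ_j/2)x_j² + g(x') on |x'| ≤ R₀, where λ_j > 0 and |g(x')| ≤ C|x'|³, g odd modulo O(|x'|⁴)—precisely g(x') = p₃(x') + O(|x'|⁴) with p₃ a homogeneous polynomial of degree 3. Then ∫_{ε^γ < |x'| < R₀} (1/f(x') − 1/q(x')) dx' = C̃ + O(ε^{(n−1)γ}) as ε → 0, where q(x') = ∑_j (λ_j/2)x_j², C̃ is a constant independent of ε, n ∈ {2,3}, and the domain is the symmetric annulus. -/

import Mathlib

/-!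
Write `G = 1/f - 1/q + p₃/q²`. Since `f = q + p₃ + O(|x'|⁴)` with `f, q ≍ |x'|²` and
`p₃ = O(|x'|³)`, the function `G` is bounded on the punctured ball `0 < |x'| < R₀`, hence
integrable there; the correction `p₃/q²` is odd, so it integrates to zero over every symmetric
annulus. Therefore the integral of `1/f - 1/q` over `ε^γ < |x'| < R₀` equals that of `G`, which
differs from `C̃ = ∫_{0 < |x'| < R₀} G` by at most `sup |G|` times the volume of the ball of
radius `ε^γ`, i.e. by `O(ε^{(n-1)γ})`.
-/

open MeasureTheory Metric Module

theorem setIntegral_eq_zero_of_odd {E F : Type*} [AddGroup E] [MeasurableSpace E]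
    [MeasurableNeg E] [NormedAddCommGroup F] [NormedSpace ℝ F] (μ : Measure E)
    [μ.IsNegInvariant] {s : Set E} (hs : -s = s) {φ : E → F} (hφ : ∀ x, φ (-x) = -φ x) :
    ∫ x in s, φ x ∂μ = 0 := by
  have h : ∫ x in s, φ (-x) ∂μ = ∫ x in s, φ x ∂μ := by
    conv_rhs => rw [← Measure.map_neg_eq_self μ]
    rw [measurableEmbedding_neg.setIntegral_map]
    simp [hs]
  simp only [hφ, integral_neg] at h
  have h2 : (2 : ℝ) • ∫ x in s, φ x ∂μ = 0 := by
    rw [two_smul]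
    nth_rw 1 [← h]
    exact neg_add_cancel _
  exact (smul_eq_zero.mp h2).resolve_left two_ne_zero

theorem abs_div_le_div_of_abs_le_mul {X Y K L s : ℝ} (hs : 0 < s) (hL : 0 < L)
    (hX : |X| ≤ K * s) (hY : L * s ≤ Y) : |X / Y| ≤ K / L := by
  have hY0 : 0 < Y := (mul_pos hL hs).trans_le hY
  rw [abs_div, abs_of_pos hY0, ← mul_div_mul_right K L hs.ne']
  exact div_le_div₀ ((abs_nonneg X).trans hX) hX (mul_pos hL hs) hY

theorem abs_one_div_sub_one_div_add_div_sq_le {F Q P t a b C R : ℝ} (ha : 0 < a) (hb : 0 < b)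
    (ht : 0 < t) (htR : t ≤ R) (hF : a * t ^ 2 ≤ F) (hQ : b * t ^ 2 ≤ Q)
    (hP : |P| ≤ C * t ^ 3) (hrem : |F - Q - P| ≤ C * t ^ 4) :
    |1 / F - 1 / Q + P / Q ^ 2| ≤ C ^ 2 * (1 + R) / (a * b ^ 2) + C / (a * b) := by
  have hF0 : 0 < F := lt_of_lt_of_le (by positivity) hF
  have hQ0 : 0 < Q := lt_of_lt_of_le (by positivity) hQ
  have hC : 0 ≤ C := nonneg_of_mul_nonneg_left ((abs_nonneg P).trans hP) (by positivity)
  have hFQ : |F - Q| ≤ C * t ^ 3 * (1 + R) := calc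
    |F - Q| = |P + (F - Q - P)| := by ring_nf
    _ ≤ C * t ^ 3 + C * t ^ 4 := (abs_add_le _ _).trans (add_le_add hP hrem)
    _ = C * t ^ 3 * (1 + t) := by ring
    _ ≤ C * t ^ 3 * (1 + R) := by gcongr
  have hfirst : |P * (F - Q) / (F * Q ^ 2)| ≤ C ^ 2 * (1 + R) / (a * b ^ 2) := by
    refine abs_div_le_div_of_abs_le_mul (s := t ^ 6) (by positivity) (by positivity) ?_ ?_
    · rw [abs_mul]
      calc |P| * |F - Q| ≤ C * t ^ 3 * (C * t ^ 3 * (1 + R)) :=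
            mul_le_mul hP hFQ (abs_nonneg _) (by positivity)
        _ = C ^ 2 * (1 + R) * t ^ 6 := by ring
    · calc a * b ^ 2 * t ^ 6 = a * t ^ 2 * (b * t ^ 2) ^ 2 := by ring
        _ ≤ F * Q ^ 2 := by gcongr
  have hsecond : |(F - Q - P) / (F * Q)| ≤ C / (a * b) := by
    refine abs_div_le_div_of_abs_le_mul (s := t ^ 4) (by positivity) (by positivity) hrem ?_
    calc a * b * t ^ 4 = a * t ^ 2 * (b * t ^ 2) := by ring
      _ ≤ F * Q := by gcongr
  -- `1/F - 1/Q = (Q - F)/(F Q)` and `Q - F = -P + O(t⁴)`: after subtracting `-P/Q²` the two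
  -- remaining terms are of size `t⁶/t⁶` and `t⁴/t⁴`.
  have hid :
      1 / F - 1 / Q + P / Q ^ 2 = P * (F - Q) / (F * Q ^ 2) - (F - Q - P) / (F * Q) := by
    field_simp
    ring
  rw [hid]
  exact (abs_sub _ _).trans (add_le_add hfirst hsecond)

theorem exists_pos_mul_norm_sq_le_sum_mul_sq {ι : Type*} [Fintype ι] [Nonempty ι] {w : ι → ℝ}
    (hw : ∀ i, 0 < w i) : ∃ c > 0, ∀ x : EuclideanSpace ℝ ι, c * ‖x‖ ^ 2 ≤ ∑ i, w i * x i ^ 2 := by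
  obtain ⟨i₀, hi₀⟩ := Finite.exists_min w
  refine ⟨w i₀, hw i₀, fun x => ?_⟩
  rw [EuclideanSpace.real_norm_sq_eq, Finset.mul_sum]
  gcongr with i
  exact hi₀ i

section Annulus

variable {E : Type*} [NormedAddCommGroup E]

def annulus (a R : ℝ) : Set E := {x | a < ‖x‖ ∧ ‖x‖ < R}

theorem isOpen_annulus (a R : ℝ) : IsOpen (annulus a R : Set E) :=
  (isOpen_lt continuous_const continuous_norm).inter (isOpen_lt continuous_norm continuous_const)

theorem neg_annulus (a R : ℝ) : -(annulus a R : Set E) = annulus a R := by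
  ext x
  simp [annulus]

theorem annulus_subset_ball (a R : ℝ) : (annulus a R : Set E) ⊆ ball 0 R :=
  fun _ hx => mem_ball_zero_iff.mpr hx.2

theorem annulus_subset_annulus {a a' : ℝ} (h : a ≤ a') (R : ℝ) :
    (annulus a' R : Set E) ⊆ annulus a R :=
  fun _ hx => ⟨h.trans_lt hx.1, hx.2⟩

theorem annulus_sdiff_annulus_subset_closedBall (a b R : ℝ) :
    (annulus a R : Set E) \ annulus b R ⊆ closedBall 0 b := fun _ hx =>
  mem_closedBall_zero_iff.mpr (le_of_not_gt fun h => hx.2 ⟨h, hx.1.2⟩)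

variable [MeasurableSpace E] [BorelSpace E] [ProperSpace E] {μ : Measure E}

theorem integrableOn_annulus_of_continuousOn [IsFiniteMeasureOnCompacts μ] {F : Type*}
    [NormedAddCommGroup F] {φ : E → F} (hφ : ContinuousOn φ {0}ᶜ) {a : ℝ} (ha : 0 < a)
    (R : ℝ) : IntegrableOn φ (annulus a R) μ := by
  have hK : IsCompact (closedBall (0 : E) R ∩ {x | a ≤ ‖x‖}) :=
    (isCompact_closedBall 0 R).inter_right (isClosed_le continuous_const continuous_norm)
  refine (hφ.mono ?_ |>.integrableOn_compact hK).mono_set ?_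
  · rintro x ⟨-, hx⟩
    exact norm_pos_iff.mp (ha.trans_le hx)
  · exact fun x hx => ⟨mem_closedBall_zero_iff.mpr hx.2.le, hx.1.le⟩

theorem integrableOn_annulus_of_norm_le [IsFiniteMeasureOnCompacts μ] {F : Type*}
    [NormedAddCommGroup F] {G : E → F} {a R M : ℝ} (hG : ContinuousOn G (annulus a R))
    (hGM : ∀ x ∈ annulus a R, ‖G x‖ ≤ M) : IntegrableOn G (annulus a R) μ :=
  IntegrableOn.of_bound
    ((measure_mono (annulus_subset_ball a R)).trans_lt measure_ball_lt_top)
    (hG.aestronglyMeasurable (isOpen_annulus a R).measurableSet)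
    M ((ae_restrict_iff' (isOpen_annulus a R).measurableSet).mpr (.of_forall hGM))

theorem norm_setIntegral_annulus_sub_le [NormedSpace ℝ E] [FiniteDimensional ℝ E]
    [μ.IsAddHaarMeasure] {F : Type*} [NormedAddCommGroup F] [NormedSpace ℝ F] {G : E → F}
    {R M b : ℝ} (hb : 0 ≤ b) (hM : 0 ≤ M) (hG : ContinuousOn G (annulus 0 R))
    (hGM : ∀ x ∈ annulus 0 R, ‖G x‖ ≤ M) :
    ‖∫ x in annulus 0 R, G x ∂μ - ∫ x in annulus b R, G x ∂μ‖ ≤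
      M * (b ^ finrank ℝ E * μ.real (ball 0 1)) := by
  have hsub := annulus_subset_annulus (E := E) hb R
  rw [← setIntegral_sdiff (isOpen_annulus b R).measurableSet
    (integrableOn_annulus_of_norm_le hG hGM) hsub,
    ← Measure.addHaar_real_closedBall μ 0 hb]
  calc _ ≤ M * μ.real (annulus 0 R \ annulus b R) :=
        norm_setIntegral_le_of_norm_le_const
          ((measure_mono (annulus_sdiff_annulus_subset_closedBall 0 b R)).trans_lt
            measure_closedBall_lt_top) fun x hx => hGM x hx.1
    _ ≤ M * μ.real (closedBall 0 b) := by
        gcongr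
        · exact measure_closedBall_lt_top.ne
        · exact annulus_sdiff_annulus_subset_closedBall 0 b R

theorem norm_setIntegral_annulus_add_odd_sub_le [NormedSpace ℝ E] [FiniteDimensional ℝ E]
    [μ.IsAddHaarMeasure] [μ.IsNegInvariant] {F : Type*} [NormedAddCommGroup F] [NormedSpace ℝ F]
    {g φ : E → F} {R M b : ℝ} (hb : 0 < b) (hM : 0 ≤ M) (hφ : ContinuousOn φ {0}ᶜ)
    (hφ_odd : ∀ x, φ (-x) = -φ x) (hgφ : ContinuousOn (fun x => g x + φ x) (annulus 0 R))
    (hgφM : ∀ x ∈ annulus 0 R, ‖g x + φ x‖ ≤ M) :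
    ‖∫ x in annulus 0 R, (g x + φ x) ∂μ - ∫ x in annulus b R, g x ∂μ‖ ≤
      M * (b ^ finrank ℝ E * μ.real (ball 0 1)) := by
  have hodd : ∫ x in annulus b R, φ x ∂μ = 0 :=
    setIntegral_eq_zero_of_odd μ (neg_annulus b R) hφ_odd
  have hg : ∫ x in annulus b R, g x ∂μ = ∫ x in annulus b R, (g x + φ x) ∂μ := by
    rw [← sub_zero (∫ x in annulus b R, (g x + φ x) ∂μ), ← hodd, ← integral_sub
      ((integrableOn_annulus_of_norm_le hgφ hgφM).mono_set (annulus_subset_annulus hb.le R))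
      (integrableOn_annulus_of_continuousOn hφ hb R)]
    simp
  rw [hg]
  exact norm_setIntegral_annulus_sub_le hb.le hM hgφ hgφM

end Annulus

theorem stmt_16_general (n : ℕ) (hn : n = 2 ∨ n = 3) (R0 κ : ℝ) (hR0 : 0 < R0) (hκ : 0 < κ)
    (lam : Fin (n-1) → ℝ) (hlam : ∀ j, 0 < lam j)
    (f p3 : EuclideanSpace ℝ (Fin (n-1)) → ℝ) (C : ℝ) (hC : 0 < C)
    (hf_cont : Continuous f) (hp3_cont : Continuous p3)
    (hp3_odd : ∀ x, p3 (-x) = - p3 x)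
    (hp3_bound : ∀ x, |p3 x| ≤ C * ‖x‖ ^ 3)
    (hrem : ∀ x, ‖x‖ ≤ R0 →
      |f x - (∑ j, (lam j / 2) * (x j) ^ 2) - p3 x| ≤ C * ‖x‖ ^ 4)
    (hf_low : ∀ x, ‖x‖ ≤ R0 → κ/4 * ‖x‖ ^ 2 ≤ f x)
    (γ : ℝ) :
    ∃ Ctil C' : ℝ, 0 < C' ∧ ∀ ε : ℝ, 0 < ε → ε < 1 →
      |(∫ x in {x : EuclideanSpace ℝ (Fin (n-1)) | ε ^ γ < ‖x‖ ∧ ‖x‖ < R0},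
          (1 / f x - 1 / (∑ j, (lam j / 2) * (x j) ^ 2))) - Ctil| ≤
        C' * ε ^ (((n:ℝ) - 1) * γ) := by
  have : Nonempty (Fin (n - 1)) := ⟨⟨0, by omega⟩⟩
  set q : EuclideanSpace ℝ (Fin (n-1)) → ℝ := fun x => ∑ j, (lam j / 2) * (x j) ^ 2
  obtain ⟨c, hc, hq_low⟩ : ∃ c > 0, ∀ x, c * ‖x‖ ^ 2 ≤ q x :=
    exists_pos_mul_norm_sq_le_sum_mul_sq fun j => half_pos (hlam j)
  have hq_pos : ∀ x : EuclideanSpace ℝ (Fin (n-1)), x ≠ 0 → 0 < q x := fun x hx =>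
    (by have := norm_pos_iff.mpr hx; positivity : 0 < c * ‖x‖ ^ 2).trans_le (hq_low x)
  have hf_pos : ∀ x ∈ annulus 0 R0, 0 < f x := fun x hx =>
    (by have := hx.1; positivity : 0 < κ / 4 * ‖x‖ ^ 2).trans_le (hf_low x hx.2.le)
  set M := C ^ 2 * (1 + R0) / (κ / 4 * c ^ 2) + C / (κ / 4 * c)
  have hodd_cont : ContinuousOn (fun x => p3 x / q x ^ 2) {0}ᶜ :=
    hp3_cont.continuousOn.div (by fun_prop) fun x hx => pow_ne_zero 2 (hq_pos x hx).ne'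
  have hG_cont : ContinuousOn (fun x => 1 / f x - 1 / q x + p3 x / q x ^ 2) (annulus 0 R0) :=
    ((continuousOn_const.div hf_cont.continuousOn fun x hx => (hf_pos x hx).ne').sub
      (continuousOn_const.div (by fun_prop) fun x hx =>
        (hq_pos x (norm_pos_iff.mp hx.1)).ne')).add
      (hodd_cont.mono fun x hx => norm_pos_iff.mp hx.1)
  have hG_bound : ∀ x ∈ annulus 0 R0, ‖1 / f x - 1 / q x + p3 x / q x ^ 2‖ ≤ M := fun x hx =>
    abs_one_div_sub_one_div_add_div_sq_le (by positivity) hc hx.1 hx.2.le (hf_low x hx.2.le)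
      (hq_low x) (hp3_bound x) (hrem x hx.2.le)
  refine ⟨∫ x in annulus 0 R0, (1 / f x - 1 / q x + p3 x / q x ^ 2),
    M * volume.real (ball (0 : EuclideanSpace ℝ (Fin (n-1))) 1),
    mul_pos (by positivity) (ENNReal.toReal_pos (measure_ball_pos _ _ one_pos).ne'
      measure_ball_lt_top.ne), fun ε hε _ => ?_⟩
  have ha : 0 < ε ^ γ := Real.rpow_pos_of_pos hε γ
  have hrate :
      ε ^ (((n:ℝ) - 1) * γ) = (ε ^ γ) ^ finrank ℝ (EuclideanSpace ℝ (Fin (n-1))) := by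
    rw [finrank_euclideanSpace_fin, ← Real.rpow_mul_natCast hε.le, mul_comm,
      Nat.cast_sub (by omega : 1 ≤ n), Nat.cast_one]
  rw [abs_sub_comm, ← Real.norm_eq_abs, hrate]
  exact (norm_setIntegral_annulus_add_odd_sub_le ha (by positivity) hodd_cont
    (fun x => by simp [q, hp3_odd, neg_div]) hG_cont hG_bound).trans_eq (by ring)

theorem stmt_16 (n : ℕ) (hn : n = 2 ∨ n = 3) (R0 κ : ℝ) (hR0 : 0 < R0) (hκ : 0 < κ)
    (lam : Fin (n-1) → ℝ) (hlam : ∀ j, 0 < lam j)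
    (f p3 : EuclideanSpace ℝ (Fin (n-1)) → ℝ) (C : ℝ) (hC : 0 < C)
    (hf_cont : Continuous f) (hp3_cont : Continuous p3)
    (hp3_odd : ∀ x, p3 (-x) = - p3 x)
    (hp3_bound : ∀ x, |p3 x| ≤ C * ‖x‖ ^ 3)
    (hrem : ∀ x, ‖x‖ ≤ R0 →
      |f x - (∑ j, (lam j / 2) * (x j) ^ 2) - p3 x| ≤ C * ‖x‖ ^ 4)
    (hf_low : ∀ x, ‖x‖ ≤ R0 → κ/4 * ‖x‖ ^ 2 ≤ f x)
    (γ : ℝ) (hγ0 : 0 < γ) (hγ : γ ≤ 1/4) :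
    ∃ Ctil C' : ℝ, 0 < C' ∧ ∀ ε : ℝ, 0 < ε → ε < 1 →
      |(∫ x in {x : EuclideanSpace ℝ (Fin (n-1)) | ε ^ γ < ‖x‖ ∧ ‖x‖ < R0},
          (1 / f x - 1 / (∑ j, (lam j / 2) * (x j) ^ 2))) - Ctil| ≤
        C' * ε ^ (((n:ℝ) - 1) * γ) :=
  stmt_16_general n hn R0 κ hR0 hκ lam hlam f p3 C hC hf_cont hp3_cont hp3_odd hp3_bound hrem hf_low
    γ
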